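/- The function K_ε(x) = -(|x|²+ε)^{-3} on ℝ¹⁶ ≅ O² has nonnegative definite octonionic Hessian at every point; in particular the diagonal entries satisfy conj∂_α ∂_α K_ε = 48(|x_β|² + ε)/(|x|²+ε)⁵ > 0 for β ≠ α. -/

import Mathlib

noncomputable section

open Quaternion

/-- The octonions, as the Cayley–Dickson double of the quaternions. -/
@[ext] structure Octonion : Type where
  q1 : Quaternion ℝ
  q2 : Quaternion ℝ

namespace Octonion

def equivProd : Octonion ≃ Quaternion ℝ × Quaternion ℝ :=
  ⟨fun x => (x.q1, x.q2), fun p => ⟨p.1, p.2⟩, fun _ => rfl, fun _ => rfl⟩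

instance : AddCommGroup Octonion := equivProd.addCommGroup
instance : Module ℝ Octonion := equivProd.module ℝ
instance : TopologicalSpace Octonion :=
  TopologicalSpace.induced equivProd inferInstance

instance : One Octonion := ⟨⟨1, 0⟩⟩

/-- Cayley–Dickson multiplication: `(a,b)(c,d) = (ac - d̄b, da + b c̄)`. -/
instance : Mul Octonion :=
  ⟨fun x y => ⟨x.q1 * y.q1 - star y.q2 * x.q2, y.q2 * x.q1 + x.q2 * star y.q1⟩⟩

/-- Octonionic conjugation. -/
def conj (x : Octonion) : Octonion := ⟨star x.q1, -x.q2⟩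

/-- The real part of an octonion. -/
def re (x : Octonion) : ℝ := x.q1.re

/-- The imaginary part of an octonion. -/
def im (x : Octonion) : Octonion := (2⁻¹ : ℝ) • (x - conj x)

/-- The squared norm `|x|²` of an octonion. -/
def normSq (x : Octonion) : ℝ := Quaternion.normSq x.q1 + Quaternion.normSq x.q2

/-- The inverse of an octonion (junk value `0` at `0`). -/
def inv (x : Octonion) : Octonion := (normSq x)⁻¹ • conj x

end Octonion

namespace Octonion

/-- The octonion with coordinates `v : Fin 8 → ℝ` in the standard basis `e₀,…,e₇`. -/
def octOf (v : Fin 8 → ℝ) : Octonion := ⟨⟨v 0, v 1, v 2, v 3⟩, ⟨v 4, v 5, v 6, v 7⟩⟩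

/-- The standard basis `e_p`, `p = 0,…,7`, of the octonions, with `e₀ = 1`. -/
def basisE (p : Fin 8) : Octonion := octOf (Pi.single p 1)

end Octonion

/-- Points of `O²` as real coordinates `x = (x_{αp})`, `α ∈ {1,2}`, `p ∈ {0,…,7}`. -/
abbrev OPt : Type := Fin 2 → Fin 8 → ℝ

/-- The octonionic coordinate `x_α` of a point of `O² ≅ ℝ¹⁶`. -/
def octPt (x : OPt) (α : Fin 2) : Octonion := Octonion.octOf (x α)

/-- The squared norm `|x|²` of a point of `O² ≅ ℝ¹⁶`. -/
def ptNormSq (x : OPt) : ℝ := ∑ α : Fin 2, ∑ p : Fin 8, (x α p) ^ 2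

/-- The partial derivative `∂u/∂x_{αp}`. -/
def pd (α : Fin 2) (p : Fin 8) (u : OPt → ℝ) (x : OPt) : ℝ :=
  fderiv ℝ u x (Pi.single α (Pi.single p 1))

/-- The Dirac operator `conj∂_α u = Σ_p e_p ∂u/∂x_{αp}` (for real-valued `u` this is the
octonion whose coordinates are the partial derivatives). -/
def diracD (α : Fin 2) (u : OPt → ℝ) (x : OPt) : Octonion :=
  Octonion.octOf fun p => pd α p u x

/-- The entry `conj∂_α ∂_β u = Σ_{q,p} (∂²u/∂x_{αq}∂x_{βp}) e_q conj(e_p)` of the octonionic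
Hessian of a scalar function `u`. -/
def octHess (u : OPt → ℝ) (α β : Fin 2) (x : OPt) : Octonion :=
  ∑ q : Fin 8, ∑ p : Fin 8,
    (pd α q (fun y => pd β p u y) x) • (Octonion.basisE q * Octonion.conj (Octonion.basisE p))

/-- The determinant of an octonionic Hermitian `2×2` matrix given by its entries:
`det A = a₁₁ a₂₂ - |a₁₂|²` (the diagonal entries being real). -/
def detEntries (A : Fin 2 → Fin 2 → Octonion) : ℝ :=
  Octonion.re (A 0 0) * Octonion.re (A 1 1) - Octonion.normSq (A 0 1)

/-!
Write `t = |x|² + ε`. Differentiating twice gives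
`∂²K_ε/∂x_{αq}∂x_{βp} = 6 δ_{αβ} δ_{qp} t⁻⁴ - 48 x_{αq} x_{βp} t⁻⁵`,
so by bilinearity of `(a, b) ↦ a b̄` the octonionic Hessian is `48 δ_{αβ} t⁻⁴ - 48 t⁻⁵ x_α x̄_β`.
Its diagonal entries are `48 (|x_β|² + ε) t⁻⁵ > 0` and its determinant is `48² ε t⁻⁹ ≥ 0`.
For an octonionic Hermitian `2 × 2` matrix this suffices (Sylvester), because the octonion norm
is multiplicative: `|Re (ξ̄₁ b ξ₂)| ≤ |ξ₁| |b| |ξ₂|`, and AM-GM finishes.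
-/

namespace Octonion

@[simp] lemma add_q1 (x y : Octonion) : (x + y).q1 = x.q1 + y.q1 := rfl
@[simp] lemma add_q2 (x y : Octonion) : (x + y).q2 = x.q2 + y.q2 := rfl
@[simp] lemma zero_q1 : (0 : Octonion).q1 = 0 := rfl
@[simp] lemma zero_q2 : (0 : Octonion).q2 = 0 := rfl
@[simp] lemma one_q1 : (1 : Octonion).q1 = 1 := rfl
@[simp] lemma one_q2 : (1 : Octonion).q2 = 0 := rfl
@[simp] lemma smul_q1 (r : ℝ) (x : Octonion) : (r • x).q1 = r • x.q1 := rfl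
@[simp] lemma smul_q2 (r : ℝ) (x : Octonion) : (r • x).q2 = r • x.q2 := rfl
@[simp] lemma mul_q1 (x y : Octonion) : (x * y).q1 = x.q1 * y.q1 - star y.q2 * x.q2 := rfl
@[simp] lemma mul_q2 (x y : Octonion) : (x * y).q2 = y.q2 * x.q1 + x.q2 * star y.q1 := rfl
@[simp] lemma conj_q1 (x : Octonion) : (conj x).q1 = star x.q1 := rfl
@[simp] lemma conj_q2 (x : Octonion) : (conj x).q2 = -x.q2 := rfl

def mulConj : Octonion →ₗ[ℝ] Octonion →ₗ[ℝ] Octonion :=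
  LinearMap.mk₂ ℝ (fun a b => a * conj b)
    (fun a a' b => by ext <;> simp <;> ring)
    (fun r a b => by ext <;> simp [smul_add])
    (fun a b b' => by ext <;> simp <;> ring)
    (fun r a b => by ext <;> simp [smul_add, Quaternion.star_smul])

lemma re_smul (r : ℝ) (x : Octonion) : re (r • x) = r * re x := rfl

lemma re_one : re (1 : Octonion) = 1 := rfl

lemma normSq_nonneg (x : Octonion) : 0 ≤ normSq x :=
  add_nonneg (Quaternion.normSq_nonneg) (Quaternion.normSq_nonneg)

lemma normSq_conj (x : Octonion) : normSq (conj x) = normSq x := by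
  simp [normSq]

lemma normSq_smul (r : ℝ) (x : Octonion) : normSq (r • x) = r ^ 2 * normSq x := by
  simp [normSq, Quaternion.normSq_smul]
  ring

lemma sq_re_le_normSq (x : Octonion) : re x ^ 2 ≤ normSq x := by
  have := Quaternion.normSq_nonneg (a := x.q2)
  simp only [normSq, Quaternion.normSq_def', re]
  nlinarith [sq_nonneg x.q1.imI, sq_nonneg x.q1.imJ, sq_nonneg x.q1.imK]

lemma mul_conj_self (x : Octonion) : x * conj x = normSq x • 1 := by
  ext <;> simp [normSq, Quaternion.normSq_def'] <;> ring

lemma normSq_mul (a b : Octonion) : normSq (a * b) = normSq a * normSq b := by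
  simp only [normSq, mul_q1, mul_q2, Quaternion.normSq_def', Quaternion.re_mul,
    Quaternion.imI_mul, Quaternion.imJ_mul, Quaternion.imK_mul, Quaternion.re_sub,
    Quaternion.imI_sub, Quaternion.imJ_sub, Quaternion.imK_sub, Quaternion.re_add,
    Quaternion.imI_add, Quaternion.imJ_add, Quaternion.imK_add, Quaternion.re_star,
    Quaternion.imI_star, Quaternion.imJ_star, Quaternion.imK_star]
  ring

lemma octOf_eq_sum (v : Fin 8 → ℝ) : octOf v = ∑ p : Fin 8, v p • basisE p := by
  ext <;>
    simp only [Fin.sum_univ_eight, add_q1, add_q2, smul_q1, smul_q2, Quaternion.re_add,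
      Quaternion.imI_add, Quaternion.imJ_add, Quaternion.imK_add, Quaternion.re_smul,
      Quaternion.imI_smul, Quaternion.imJ_smul, Quaternion.imK_smul] <;>
    simp [octOf, basisE]

lemma normSq_octOf (v : Fin 8 → ℝ) : normSq (octOf v) = ∑ p : Fin 8, v p ^ 2 := by
  simp only [normSq, Quaternion.normSq_def']
  simp [Fin.sum_univ_eight, octOf]
  ring

lemma basisE_mul_conj_self (q : Fin 8) : basisE q * conj (basisE q) = 1 := by
  rw [mul_conj_self, basisE, normSq_octOf]
  fin_cases q <;> simp [Fin.sum_univ_eight]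

lemma octOf_mul_conj_octOf (v w : Fin 8 → ℝ) :
    octOf v * conj (octOf w) =
      ∑ q : Fin 8, ∑ p : Fin 8, (v q * w p) • (basisE q * conj (basisE p)) := by
  have h : octOf v * conj (octOf w) = mulConj (octOf v) (octOf w) := rfl
  rw [h, octOf_eq_sum v, octOf_eq_sum w, LinearMap.map_sum₂]
  simp only [map_sum, map_smul, LinearMap.smul_apply, smul_smul, mul_comm (w _)]
  rfl

lemma sq_re_conj_mul_mul_le (ξ₁ b ξ₂ : Octonion) :
    re ((conj ξ₁ * b) * ξ₂) ^ 2 ≤ normSq ξ₁ * normSq b * normSq ξ₂ := by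
  simpa [normSq_mul, normSq_conj] using sq_re_le_normSq ((conj ξ₁ * b) * ξ₂)

lemma hermForm_nonneg_of_detEntries_nonneg {A : Fin 2 → Fin 2 → Octonion}
    (h₀ : 0 ≤ re (A 0 0)) (h₁ : 0 ≤ re (A 1 1)) (hdet : 0 ≤ detEntries A)
    (ξ₁ ξ₂ : Octonion) :
    0 ≤ re (A 0 0) * normSq ξ₁ + re (A 1 1) * normSq ξ₂ +
      2 * re ((conj ξ₁ * A 0 1) * ξ₂) := by
  have hm₁ := normSq_nonneg ξ₁
  have hm₂ := normSq_nonneg ξ₂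
  have hr : re ((conj ξ₁ * A 0 1) * ξ₂) ^ 2
      ≤ (re (A 0 0) * normSq ξ₁) * (re (A 1 1) * normSq ξ₂) := by
    refine (sq_re_conj_mul_mul_le ξ₁ (A 0 1) ξ₂).trans ?_
    have : normSq (A 0 1) ≤ re (A 0 0) * re (A 1 1) := sub_nonneg.mp hdet
    nlinarith [mul_nonneg hm₁ hm₂]
  -- AM-GM: `(a m₁ + c m₂)² ≥ 4 (a m₁) (c m₂) ≥ (2 r)²`
  nlinarith [sq_nonneg (re (A 0 0) * normSq ξ₁ - re (A 1 1) * normSq ξ₂),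
    mul_nonneg h₀ hm₁, mul_nonneg h₁ hm₂]

end Octonion

section PartialDerivatives

variable {α : Fin 2} {q : Fin 8} {x : OPt}

lemma pd_coord (β : Fin 2) (p : Fin 8) :
    pd α q (fun y => y β p) x = if α = β ∧ q = p then 1 else 0 := by
  have h : HasFDerivAt (𝕜 := ℝ) (fun y : OPt => y β p) _ x :=
    HasFDerivAt.comp (g := fun f : Fin 8 → ℝ => f p) x (hasFDerivAt_apply p (x β))
      (hasFDerivAt_apply β x)
  rw [pd, h.fderiv]
  by_cases h₁ : α = β <;> by_cases h₂ : q = p <;> simp [h₁, h₂, eq_comm]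

lemma pd_comp {g : ℝ → ℝ} {g' : ℝ} {u : OPt → ℝ} (hg : HasDerivAt g g' (u x))
    (hu : DifferentiableAt ℝ u x) : pd α q (fun y => g (u y)) x = g' * pd α q u x := by
  have h : HasFDerivAt (fun y => g (u y)) _ x := hg.comp_hasFDerivAt x hu.hasFDerivAt
  rw [pd, pd, h.fderiv]
  simp [smul_eq_mul]

lemma pd_mul {u v : OPt → ℝ} (hu : DifferentiableAt ℝ u x) (hv : DifferentiableAt ℝ v x) :
    pd α q (fun y => u y * v y) x = pd α q u x * v x + u x * pd α q v x := by
  rw [pd, pd, pd, fderiv_fun_mul hu hv]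
  simp [smul_eq_mul]
  ring

lemma pd_sum {ι : Type*} (s : Finset ι) {u : ι → OPt → ℝ}
    (hu : ∀ i ∈ s, DifferentiableAt ℝ (u i) x) :
    pd α q (fun y => ∑ i ∈ s, u i y) x = ∑ i ∈ s, pd α q (u i) x := by
  rw [pd, fderiv_fun_sum hu]
  simp [pd]

lemma differentiable_ptNormSq : Differentiable ℝ ptNormSq := by
  unfold ptNormSq
  fun_prop

lemma pd_ptNormSq : pd α q ptNormSq x = 2 * x α q := by
  have hsq (β : Fin 2) (p : Fin 8) : pd α q (fun y => y β p ^ 2) x =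
      if α = β ∧ q = p then 2 * x α q else 0 := by
    rw [pd_comp (g := fun s => s ^ 2) (u := fun y => y β p) (hasDerivAt_pow 2 _) (by fun_prop),
      pd_coord]
    split_ifs with h
    · simp [h.1, h.2]
    · simp
  have hrow (β : Fin 2) : pd α q (fun y => ∑ p, y β p ^ 2) x =
      if α = β then 2 * x α q else 0 := by
    rw [pd_sum _ fun p _ => by fun_prop]
    simp only [hsq]
    by_cases h : α = β <;> simp [h]
  unfold ptNormSq
  rw [pd_sum _ fun β _ => by fun_prop]
  simp [hrow]

end PartialDerivatives

open Octonion

lemma ptNormSq_nonneg (x : OPt) : 0 ≤ ptNormSq x := by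
  unfold ptNormSq
  positivity

lemma ptNormSq_eq_normSq_add {α β : Fin 2} (h : α ≠ β) (x : OPt) :
    ptNormSq x = normSq (octPt x α) + normSq (octPt x β) := by
  simp only [octPt, normSq_octOf, ptNormSq, Fin.sum_univ_two]
  fin_cases α <;> fin_cases β <;> simp_all [add_comm]

def kEps (ε : ℝ) (y : OPt) : ℝ := -((ptNormSq y + ε) ^ 3)⁻¹

section Kernel

variable {ε : ℝ} (hε : 0 < ε)
include hε

lemma ptNormSq_add_pos (x : OPt) : 0 < ptNormSq x + ε :=
  add_pos_of_nonneg_of_pos (ptNormSq_nonneg x) hε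

lemma pd_kEps (β : Fin 2) (p : Fin 8) (y : OPt) :
    pd β p (kEps ε) y = y β p * (6 * ((ptNormSq y + ε) ^ 4)⁻¹) := by
  have ht := (ptNormSq_add_pos hε y).ne'
  have hg : HasDerivAt (fun s => -((s + ε) ^ 3)⁻¹) (3 * ((ptNormSq y + ε) ^ 4)⁻¹)
      (ptNormSq y) := by
    refine ((((hasDerivAt_id' _).add_const ε).fun_pow 3).inv (pow_ne_zero 3 ht)).neg
      |>.congr_deriv ?_
    field_simp
    ring
  unfold kEps
  rw [pd_comp hg (differentiable_ptNormSq y), pd_ptNormSq]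
  ring

lemma pd_pd_kEps (α β : Fin 2) (q p : Fin 8) (x : OPt) :
    pd α q (fun y => pd β p (kEps ε) y) x =
      (if α = β ∧ q = p then 6 * ((ptNormSq x + ε) ^ 4)⁻¹ else 0)
        - 48 * x α q * x β p * ((ptNormSq x + ε) ^ 5)⁻¹ := by
  have ht := (ptNormSq_add_pos hε x).ne'
  have hg : HasDerivAt (fun s => 6 * ((s + ε) ^ 4)⁻¹) (-24 * ((ptNormSq x + ε) ^ 5)⁻¹)
      (ptNormSq x) := by
    refine ((((hasDerivAt_id' _).add_const ε).fun_pow 4).inv (pow_ne_zero 4 ht)).const_mul 6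
      |>.congr_deriv ?_
    field_simp
    ring
  simp_rw [pd_kEps hε]
  rw [pd_mul (u := fun y => y β p) (v := fun y => 6 * ((ptNormSq y + ε) ^ 4)⁻¹) (by fun_prop)
      (hg.differentiableAt.comp x (differentiable_ptNormSq x)),
    pd_coord, pd_comp hg (differentiable_ptNormSq x), pd_ptNormSq]
  split_ifs <;> field_simp <;> ring

end Kernel

section Hessian

variable {ε : ℝ} (hε : 0 < ε)
include hε

lemma octHess_kEps (α β : Fin 2) (x : OPt) :
    octHess (kEps ε) α β x =
      (if α = β then 48 * ((ptNormSq x + ε) ^ 4)⁻¹ else 0) • (1 : Octonion)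
        - (48 * ((ptNormSq x + ε) ^ 5)⁻¹) • (octPt x α * conj (octPt x β)) := by
  have hδ (c : ℝ) : ∑ q : Fin 8, ∑ p : Fin 8,
      (if α = β ∧ q = p then 6 * c else 0) • (basisE q * conj (basisE p)) =
        (if α = β then 48 * c else 0) • (1 : Octonion) := by
    by_cases h : α = β
    · simp only [h, true_and, ite_smul, zero_smul, Finset.sum_ite_eq, Finset.mem_univ,
        if_true, basisE_mul_conj_self, Finset.sum_const, Finset.card_univ, Fintype.card_fin,
        ← Nat.cast_smul_eq_nsmul ℝ, Nat.cast_ofNat, smul_smul]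
      ring_nf
    · simp [h]
  have hx (d : ℝ) : ∑ q : Fin 8, ∑ p : Fin 8,
      (48 * x α q * x β p * d) • (basisE q * conj (basisE p)) =
        (48 * d) • (octPt x α * conj (octPt x β)) := by
    simp_rw [octPt, octOf_mul_conj_octOf, Finset.smul_sum, smul_smul]
    congr! 3
    ring
  unfold octHess
  simp_rw [pd_pd_kEps hε, sub_smul, Finset.sum_sub_distrib, hδ, hx]

lemma octHess_kEps_self {α β : Fin 2} (h : α ≠ β) (x : OPt) :
    octHess (kEps ε) α α x =
      (48 * (normSq (octPt x β) + ε) * ((ptNormSq x + ε) ^ 5)⁻¹) • (1 : Octonion) := by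
  have ht := (ptNormSq_add_pos hε x).ne'
  rw [octHess_kEps hε, if_pos rfl, mul_conj_self, smul_smul, ← sub_smul]
  congr 1
  rw [ptNormSq_eq_normSq_add h x] at ht ⊢
  field_simp
  ring

lemma octHess_kEps_of_ne {α β : Fin 2} (h : α ≠ β) (x : OPt) :
    octHess (kEps ε) α β x =
      -(48 * ((ptNormSq x + ε) ^ 5)⁻¹) • (octPt x α * conj (octPt x β)) := by
  rw [octHess_kEps hε, if_neg h, zero_smul, zero_sub, neg_smul]

lemma detEntries_octHess_kEps (x : OPt) :
    detEntries (fun α β => octHess (kEps ε) α β x) =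
      48 ^ 2 * ε * ((ptNormSq x + ε) ^ 9)⁻¹ := by
  have ht := (ptNormSq_add_pos hε x).ne'
  rw [detEntries, octHess_kEps_self hε zero_ne_one, octHess_kEps_self hε one_ne_zero,
    octHess_kEps_of_ne hε zero_ne_one, re_smul, re_smul, re_one, normSq_smul, normSq_mul,
    normSq_conj]
  rw [ptNormSq_eq_normSq_add zero_ne_one x] at ht ⊢
  field_simp
  ring

lemma octHess_kEps_coeff_pos (x : OPt) (β : Fin 2) :
    0 < 48 * (normSq (octPt x β) + ε) * ((ptNormSq x + ε) ^ 5)⁻¹ := by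
  have := normSq_nonneg (octPt x β)
  have := ptNormSq_add_pos hε x
  positivity

end Hessian

open Octonion in
/-- The octonionic Hessian of `K_ε(x) = -(|x|²+ε)⁻³` is nonnegative definite
at every point, and its diagonal entries satisfy
`conj∂_α ∂_α K_ε = 48(|x_β|²+ε)/(|x|²+ε)⁵ > 0` for `β ≠ α`. -/
theorem octHess_Keps_posSemidef (ε : ℝ) (hε : 0 < ε) (x : OPt) :
    (∀ ξ₁ ξ₂ : Octonion,
      0 ≤ re (octHess (fun y => -((ptNormSq y + ε) ^ 3)⁻¹) 0 0 x) * normSq ξ₁ +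
          re (octHess (fun y => -((ptNormSq y + ε) ^ 3)⁻¹) 1 1 x) * normSq ξ₂ +
          2 * re ((conj ξ₁ * octHess (fun y => -((ptNormSq y + ε) ^ 3)⁻¹) 0 1 x) * ξ₂)) ∧
    (∀ α β : Fin 2, α ≠ β →
      octHess (fun y => -((ptNormSq y + ε) ^ 3)⁻¹) α α x =
        (48 * (normSq (octPt x β) + ε) * ((ptNormSq x + ε) ^ 5)⁻¹) • (1 : Octonion) ∧
      0 < 48 * (normSq (octPt x β) + ε) * ((ptNormSq x + ε) ^ 5)⁻¹) := by
  have hre {α β : Fin 2} (h : α ≠ β) : 0 ≤ re (octHess (kEps ε) α α x) := by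
    rw [octHess_kEps_self hε h, re_smul, re_one, mul_one]
    exact (octHess_kEps_coeff_pos hε x β).le
  refine ⟨fun ξ₁ ξ₂ => ?_,
    fun α β h => ⟨octHess_kEps_self hε h x, octHess_kEps_coeff_pos hε x β⟩⟩
  refine hermForm_nonneg_of_detEntries_nonneg (A := fun α β => octHess (kEps ε) α β x)
    (hre zero_ne_one) (hre one_ne_zero) ?_ ξ₁ ξ₂
  rw [detEntries_octHess_kEps hε]
  have := ptNormSq_add_pos hε x
  positivity
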